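/- arXiv:1801.00471 — 4 statements merged into one kernel-verified Lean document; each statement's English description precedes it below -/
import Mathlib

section
/- If x does not occur in M and M ≠ x, then the substitution [M/x] unifies x with M and is a most general unifier of x and M. -/
/-!
`[M/x]` moves no variable other than `x`, so it fixes `M` when `x ∉ M` and sends both `x` and `M`
to `M`. It is most general because every unifier `σ'` of `x` and `M` factors through it as
`σ' = σ' ∘ [M/x]`: off `x` the two agree trivially, and at `x` this is `σ'(x) = σ'(M)`.
-/

/-- First-order terms: variables or constructor applications. -/
inductive Tm where
  | var : ℕ → Tm
  | app : ℕ → List Tm → Tm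

/-- The occurs relation `x ∈ M`. -/
inductive Occurs : ℕ → Tm → Prop where
  | var : ∀ {x}, Occurs x (.var x)
  | app : ∀ {x c Ms M}, M ∈ Ms → Occurs x M → Occurs x (.app c Ms)

/-- The non-occurs relation `x ∉ M`. -/
inductive NotOccurs : ℕ → Tm → Prop where
  | var : ∀ {x y}, x ≠ y → NotOccurs x (.var y)
  | app : ∀ {x c Ms}, (∀ M ∈ Ms, NotOccurs x M) → NotOccurs x (.app c Ms)

/-- Strict substructure relation `M ⊏ M'`. -/
inductive Substr : Tm → Tm → Prop where
  | base : ∀ {M c Ms}, M ∈ Ms → Substr M (.app c Ms)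
  | ind : ∀ {M Mi c Ms}, Mi ∈ Ms → Substr M Mi → Substr M (.app c Ms)

/-- Homomorphic extension of a substitution `σ : ℕ → Tm` to terms. -/
def applySub (σ : ℕ → Tm) : Tm → Tm
  | .var y => σ y
  | .app c Ms => .app c (Ms.attach.map (fun ⟨m, _⟩ => applySub σ m))
  decreasing_by have := List.sizeOf_lt_of_mem ‹_›; simp_all; omega

/-- The single substitution `[M/x]`. -/
def single (M : Tm) (x : ℕ) : ℕ → Tm := fun y => if y = x then M else .var y

/-- Capture-free substitution `[M/x]M'`. -/
def subst (M : Tm) (x : ℕ) (M' : Tm) : Tm := applySub (single M x) M'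

theorem applySub_eq_self {σ : ℕ → Tm} {M : Tm} (hσ : ∀ y, Occurs y M → σ y = .var y) :
    applySub σ M = M := by
  induction M using applySub.induct with
  | case1 y => rw [applySub]; exact hσ y .var
  | case2 c Ms ih =>
    rw [applySub]
    congr 1
    refine List.ext_getElem (by simp) fun i _ _ => ?_
    rw [List.getElem_map, List.getElem_attach]
    exact ih _ (List.getElem_mem _) fun y hy => hσ y (.app (List.getElem_mem _) hy)

theorem applySub_single_of_not_occurs {x : ℕ} {M N : Tm} (h : ¬ Occurs x N) :
    applySub (single M x) N = N :=
  applySub_eq_self fun y hy => if_neg fun (hyx : y = x) => h (hyx ▸ hy)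

theorem applySub_single_of_unifies {σ : ℕ → Tm} {x : ℕ} {M : Tm}
    (hσ : applySub σ (.var x) = applySub σ M) (y : ℕ) :
    applySub σ (single M x y) = σ y := by
  unfold single
  split_ifs with hyx
  · rw [hyx, ← hσ, applySub]
  · rw [applySub]

theorem single_is_mgu_general {x : ℕ} {M : Tm} (h : ¬ Occurs x M) :
    applySub (single M x) (.var x) = applySub (single M x) M ∧
    ∀ σ' : ℕ → Tm, applySub σ' (.var x) = applySub σ' M →
      ∃ σs : ℕ → Tm, ∀ y, σ' y = applySub σs (single M x y) := by
  refine ⟨?_, fun σ' hσ' => ⟨σ', fun y => (applySub_single_of_unifies hσ' y).symm⟩⟩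
  rw [applySub_single_of_not_occurs h, applySub, single, if_pos rfl]

/-- If x does not occur in M and M ≠ x, then [M/x] unifies x with M
and is a most general unifier of x and M. -/
theorem single_is_mgu {x : ℕ} {M : Tm} (h : ¬ Occurs x M) (hne : M ≠ .var x) :
    applySub (single M x) (.var x) = applySub (single M x) M ∧
    ∀ σ' : ℕ → Tm, applySub σ' (.var x) = applySub σ' M →
      ∃ σs : ℕ → Tm, ∀ y, σ' y = applySub σs (single M x y) :=
  single_is_mgu_general h
end

section
/- The heap occurs-check is total and functional: in an acyclic well-typed heap H, for any locations ℓ₁ and ℓ₂ with ℓ₂ in the domain of the heap typing, exactly one of ℓ₁ ∈_H ℓ₂ (ℓ₁ occurs in the term rooted at ℓ₂) or ℓ₁ ∉_H ℓ₂ holds. -/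
/-- Heap values: structures, free variables (annotated with an atomic type),
pointers, tuples, and closures. Locations are natural numbers. -/
inductive HVal where
  | str : ℕ → List ℕ → HVal      -- constructor applied to argument locations
  | free : ℕ → HVal              -- free variable annotated with its atomic type
  | bound : ℕ → HVal             -- pointer to another location
  | tuple : List ℕ → HVal        -- tuple of word values (locations)
  | close : ℕ → ℕ → HVal         -- closure: environment location and code label

/-- The component locations a heap value refers to. -/
def HVal.components : HVal → List ℕ
  | .str _ ls => ls
  | .free _ => []
  | .bound l => [l]
  | .tuple ls => ls
  | .close w _ => [w]

/-- A heap maps locations to heap values (partially). -/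
abbrev Heap := ℕ → Option HVal

/-- Heap update/extension `H[ℓ ↦ v]`. -/
def Heap.update (H : Heap) (l : ℕ) (v : HVal) : Heap :=
  fun l' => if l' = l then some v else H l'

/-- The heap occurs relation `ℓ₁ ∈_H ℓ₂`: `ℓ₁` occurs in the value rooted at `ℓ₂`
(by reflexivity, by following `bound` pointers, or through a component of a
structure, tuple, or closure). -/
inductive HOccurs (H : Heap) : ℕ → ℕ → Prop where
  | refl : ∀ {l}, HOccurs H l l
  | step : ∀ {l₁ l₂ v l'}, H l₂ = some v → l' ∈ v.components →
      HOccurs H l₁ l' → HOccurs H l₁ l₂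

/-- The heap non-occurs relation `ℓ₁ ∉_H ℓ₂`, dual to `HOccurs`:
`ℓ₂` is a cell distinct from `ℓ₁` none of whose components contains `ℓ₁`. -/
inductive NHOccurs (H : Heap) : ℕ → ℕ → Prop where
  | free : ∀ {l₁ l₂ a}, l₁ ≠ l₂ → H l₂ = some (.free a) → NHOccurs H l₁ l₂
  | step : ∀ {l₁ l₂ v}, l₁ ≠ l₂ → H l₂ = some v →
      (∀ l' ∈ v.components, NHOccurs H l₁ l') → NHOccurs H l₁ l₂

/-- Types of heap cells: Prolog-term (atomic) types, tuple types, and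
continuation (closure) types. -/
inductive Ty where
  | atom : ℕ → Ty
  | tup : List Ty → Ty
  | cont : Ty

/-- A signature assigns to each constructor its argument atomic types and its
result atomic type. -/
abbrev Sig := ℕ → Option (List ℕ × ℕ)

/-- A heap typing derivation is an ordered list of typed locations,
newest first; the heap type `Ψ` it induces looks a location up. -/
abbrev Deriv := List (ℕ × Ty)

/-- The (unordered) heap type `Ψ` induced by a derivation. -/
def psiOf (D : Deriv) : ℕ → Option Ty :=
  fun l => (D.find? (fun p => p.1 = l)).map Prod.snd

/-- Heap value typing `Ψ ⊢ v : τ` relative to a signature. -/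
inductive VTy (Sg : Sig) (Ψ : ℕ → Option Ty) : HVal → Ty → Prop where
  | free : ∀ {a}, VTy Sg Ψ (.free a) (.atom a)
  | bound : ∀ {l a}, Ψ l = some (.atom a) → VTy Sg Ψ (.bound l) (.atom a)
  | str : ∀ {c ls as a}, Sg c = some (as, a) →
      List.Forall₂ (fun l b => Ψ l = some (.atom b)) ls as →
      VTy Sg Ψ (.str c ls) (.atom a)
  | tuple : ∀ {ls τs}, List.Forall₂ (fun l τ => Ψ l = some τ) ls τs →
      VTy Sg Ψ (.tuple ls) (.tup τs)
  | close : ∀ {w lc τ}, Ψ w = some τ → VTy Sg Ψ (.close w lc) .cont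

/-- Heap typing derivations `H : Ψ`: locations are typed one at a time and each
value may only refer to previously typed locations, so a derivation is a
topological ordering witnessing acyclicity of the heap. -/
inductive HeapTy (Sg : Sig) (H : Heap) : Deriv → Prop where
  | nil : HeapTy Sg H []
  | cons : ∀ {D l v τ}, HeapTy Sg H D → H l = some v → VTy Sg (psiOf D) v τ →
      psiOf D l = none → HeapTy Sg H ((l, τ) :: D)

/-- Locations typed strictly before `l` in the derivation `D`
(derivations are newest-first, so predecessors appear after `l` in the list). -/
def predD (D : Deriv) (l : ℕ) : List ℕ :=
  ((D.dropWhile (fun p => p.1 ≠ l)).tail).map Prod.fst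

/-- Locations typed strictly after `l` in the derivation `D`. -/
def succD (D : Deriv) (l : ℕ) : List ℕ :=
  (D.takeWhile (fun p => p.1 ≠ l)).map Prod.fst

/-- `end(H, ℓ)` follows `bound`-pointer chains: `EndsAt H ℓ ℓ'` says the chain
starting at `ℓ` terminates at `ℓ'`, which holds a free variable or structure. -/
inductive EndsAt (H : Heap) : ℕ → ℕ → Prop where
  | free : ∀ {l a}, H l = some (.free a) → EndsAt H l l
  | str : ∀ {l c ls}, H l = some (.str c ls) → EndsAt H l l
  | bound : ∀ {l l' l''}, H l = some (.bound l') → EndsAt H l' l'' → EndsAt H l l''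

lemma forall₂_mem_left' {α β : Type _} {R : α → β → Prop} {as : List α} {bs : List β}
    (h : List.Forall₂ R as bs) {a : α} (ha : a ∈ as) : ∃ b, R a b := by
  revert ha
  induction h with
  | nil => intro ha; simp at ha
  | cons hr _ ih =>
    intro ha
    cases ha with
    | head => exact ⟨_, hr⟩
    | tail _ ha => exact ih ha

lemma vty_comp {Sg : Sig} {Ψ : ℕ → Option Ty} {v : HVal} {τ : Ty}
    (h : VTy Sg Ψ v τ) : ∀ l' ∈ v.components, (Ψ l').isSome := by
  cases h with
  | free => simp [HVal.components]
  | bound h => intro l' hl'; simp [HVal.components] at hl'; subst hl'; simp [h]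
  | str hs hf =>
    intro l' hl'; simp [HVal.components] at hl'
    obtain ⟨b, hb⟩ := forall₂_mem_left' hf hl'; simp [hb]
  | tuple hf =>
    intro l' hl'; simp [HVal.components] at hl'
    obtain ⟨b, hb⟩ := forall₂_mem_left' hf hl'; simp [hb]
  | close h => intro l' hl'; simp [HVal.components] at hl'; subst hl'; simp [h]

lemma not_both {H : Heap} {l₁ l₂ : ℕ} (ho : HOccurs H l₁ l₂) :
    NHOccurs H l₁ l₂ → False := by
  induction ho with
  | refl =>
    intro hn
    cases hn with
    | free hne _ => exact hne rfl
    | step hne _ _ => exact hne rfl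
  | step hH hmem ho ih =>
    intro hn
    cases hn with
    | free hne hf =>
      rw [hH] at hf; injection hf with e; subst e
      simp [HVal.components] at hmem
    | step hne hH' hall =>
      rw [hH] at hH'; injection hH' with e; subst e
      exact ih (hall _ hmem)

lemma occurs_total {Sg : Sig} {H : Heap} {D : Deriv}
    (hty : HeapTy Sg H D) (l₁ : ℕ) :
    ∀ l₂, (psiOf D l₂).isSome → HOccurs H l₁ l₂ ∨ NHOccurs H l₁ l₂ := by
  induction hty with
  | nil => intro l₂ h; simp [psiOf] at h
  | @cons D l v τ _ hHl hv hnone ih =>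
    intro l₂ hdom
    by_cases hl : l₂ = l
    · subst hl
      by_cases h12 : l₁ = l₂
      · subst h12; exact Or.inl HOccurs.refl
      · have hcomps : ∀ l' ∈ v.components, HOccurs H l₁ l' ∨ NHOccurs H l₁ l' := by
          intro l' hl'
          exact ih l' (vty_comp hv l' hl')
        by_cases hex : ∃ l' ∈ v.components, HOccurs H l₁ l'
        · obtain ⟨l', hl', ho⟩ := hex
          exact Or.inl (HOccurs.step hHl hl' ho)
        · push_neg at hex
          refine Or.inr (NHOccurs.step h12 hHl ?_)
          intro l' hl'
          rcases hcomps l' hl' with ho | hn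
          · exact absurd ho (hex l' hl')
          · exact hn
    · apply ih
      simp only [psiOf, List.find?] at hdom ⊢
      rw [show (decide ((l, τ).1 = l₂)) = false by simp [hl, Ne.symm]] at hdom
      exact hdom

/-- In an acyclic well-typed heap, the occurs check is total and
functional: exactly one of `ℓ₁ ∈_H ℓ₂` and `ℓ₁ ∉_H ℓ₂` holds whenever `ℓ₂` is in
the domain of the heap typing. -/
theorem heap_occurs_total_functional {Sg : Sig} {H : Heap} {D : Deriv}
    (hty : HeapTy Sg H D) (l₁ l₂ : ℕ) (hdom : (psiOf D l₂).isSome) :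
    Xor' (HOccurs H l₁ l₂) (NHOccurs H l₁ l₂) := by
  rcases occurs_total hty l₁ l₂ hdom with h | h
  · exact Or.inl ⟨h, fun hn => not_both h hn⟩
  · exact Or.inr ⟨h, fun ho => not_both ho h⟩
end

section
/- Heap Reordering: if H : Ψ has a typing derivation D (a topological ordering of locations), H(ℓ₁) is a free variable cell, ℓ₁ and ℓ₂ are both assigned types by Ψ, and ℓ₁ does not occur in the term rooted at ℓ₂ (the occurs check passes), then there exists another typing derivation D' of H : Ψ in which ℓ₂ appears before ℓ₁, the successors of ℓ₁ in D' are a subset of those in D, and the predecessors of ℓ₂ in D' are a subset of those in D. -/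
/-! Write `D = A ++ (ℓ₁, τ₁) :: B`. If `ℓ₂` is already typed in `B` there is
nothing to do. Otherwise move `ℓ₁` up past every entry of `A` whose term does not
contain `ℓ₁`. Those entries only refer to older ones that do not contain `ℓ₁` either,
so they stay well typed below `ℓ₁`, while the entries that do contain `ℓ₁` stay above
it; `ℓ₂` is among the moved entries by the occurs check. -/

def keys (D : Deriv) : List ℕ := D.map Prod.fst

theorem keys_append (X Y : Deriv) : keys (X ++ Y) = keys X ++ keys Y :=
  List.map_append ..

theorem mem_keys {D : Deriv} {l : ℕ} : l ∈ keys D ↔ ∃ τ, (l, τ) ∈ D := by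
  simp [keys]

theorem psiOf_eq_none_iff {D : Deriv} {l : ℕ} : psiOf D l = none ↔ l ∉ keys D := by
  simp only [psiOf, Option.map_eq_none_iff, List.find?_eq_none, decide_eq_true_eq, mem_keys]
  exact ⟨fun h ⟨τ, hl⟩ => h _ hl rfl, fun h q hq hql => h ⟨q.2, hql ▸ hq⟩⟩

theorem psiOf_append (X Y : Deriv) (l : ℕ) :
    psiOf (X ++ Y) l = (psiOf X l).or (psiOf Y l) := by
  simp only [psiOf, List.find?_append]
  cases X.find? (fun p => p.1 = l) <;> rfl

theorem psiOf_append_of_not_mem {X : Deriv} {l : ℕ} (Y : Deriv) (h : l ∉ keys X) :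
    psiOf (X ++ Y) l = psiOf Y l := by
  rw [psiOf_append, psiOf_eq_none_iff.mpr h, Option.none_or]

theorem psiOf_append_cons_of_ne (X Y : Deriv) {l' l : ℕ} (τ : Ty) (h : l' ≠ l) :
    psiOf (X ++ (l', τ) :: Y) l = psiOf (X ++ Y) l := by
  simp [psiOf, h]

theorem mem_of_psiOf_eq_some {D : Deriv} {l : ℕ} {τ : Ty} (h : psiOf D l = some τ) :
    (l, τ) ∈ D := by
  obtain ⟨⟨l', τ'⟩, hfind, rfl⟩ := Option.map_eq_some_iff.mp h
  obtain rfl : l' = l := by simpa using List.find?_some hfind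
  exact List.mem_of_find?_eq_some hfind

theorem psiOf_eq_some_of_mem {D : Deriv} (hD : (keys D).Nodup) {l : ℕ} {τ : Ty}
    (h : (l, τ) ∈ D) : psiOf D l = some τ := by
  induction D with
  | nil => simp at h
  | cons p D ih =>
    obtain ⟨hp, hD⟩ := List.nodup_cons.mp hD
    rcases List.mem_cons.mp h with rfl | h
    · simp [psiOf]
    · have hne : p.1 ≠ l := fun he => hp (mem_keys.mpr ⟨τ, he ▸ h⟩)
      simpa [psiOf, List.find?_cons, hne] using ih hD h

theorem psiOf_eq_of_perm {D D' : Deriv} (hD : (keys D).Nodup) (hp : D'.Perm D) :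
    psiOf D' = psiOf D := by
  have hkeys : (keys D').Perm (keys D) := hp.map Prod.fst
  funext l
  cases h : psiOf D l with
  | none => exact psiOf_eq_none_iff.mpr fun hl => psiOf_eq_none_iff.mp h (hkeys.subset hl)
  | some τ =>
    exact psiOf_eq_some_of_mem (hkeys.nodup_iff.mpr hD) (hp.mem_iff.mpr (mem_of_psiOf_eq_some h))

theorem fst_ne_of_not_mem_keys {X : Deriv} {l : ℕ} (h : l ∉ keys X) {q : ℕ × Ty}
    (hq : q ∈ X) : q.1 ≠ l :=
  fun he => h (mem_keys.mpr ⟨q.2, he ▸ hq⟩)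

theorem not_mem_keys_of_nodup_append_cons {X Y : Deriv} {l : ℕ} {τ : Ty}
    (h : (keys (X ++ (l, τ) :: Y)).Nodup) : l ∉ keys X := by
  rw [keys_append] at h
  exact fun hl => (List.nodup_append.mp h).2.2 _ hl _ List.mem_cons_self rfl

theorem predD_append_cons {X : Deriv} {l : ℕ} (τ : Ty) (Y : Deriv) (h : l ∉ keys X) :
    predD (X ++ (l, τ) :: Y) l = keys Y := by
  have hX : ∀ q ∈ X, (fun q : ℕ × Ty => !decide (q.1 = l)) q := fun q hq => by
    simpa using fst_ne_of_not_mem_keys h hq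
  simp [predD, keys, List.dropWhile_append_of_pos hX]

theorem succD_append_cons {X : Deriv} {l : ℕ} (τ : Ty) (Y : Deriv) (h : l ∉ keys X) :
    succD (X ++ (l, τ) :: Y) l = keys X := by
  have hX : ∀ q ∈ X, (fun q : ℕ × Ty => !decide (q.1 = l)) q := fun q hq => by
    simpa using fst_ne_of_not_mem_keys h hq
  simp [succD, keys, List.takeWhile_append_of_pos hX]

theorem VTy.mono {Sg : Sig} {Ψ Ψ' : ℕ → Option Ty} {v : HVal} {τ : Ty} (h : VTy Sg Ψ v τ)
    (hΨ : ∀ l ∈ v.components, ∀ t, Ψ l = some t → Ψ' l = some t) : VTy Sg Ψ' v τ := by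
  have hForall₂ {α : Type} {ls : List ℕ} {R : ℕ → α → Prop} {S : ℕ → α → Prop} {as : List α}
      (hR : List.Forall₂ R ls as) (hls : ∀ l ∈ ls, ∀ a, R l a → S l a) :
      List.Forall₂ S ls as :=
    ((List.forall₂_and_left _ _).mpr ⟨hls, hR⟩).imp fun _ _ h => h.1 _ h.2
  cases h with
  | free => exact .free
  | bound hl => exact .bound (hΨ _ (by simp [HVal.components]) _ hl)
  | str hc hls => exact .str hc (hForall₂ hls fun l hl a => hΨ l hl (.atom a))
  | tuple hls => exact .tuple (hForall₂ hls fun l hl => hΨ l hl)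
  | close hw => exact .close (hΨ _ (by simp [HVal.components]) _ hw)

theorem NHOccurs.ne {H : Heap} {l₁ l₂ : ℕ} (h : NHOccurs H l₁ l₂) : l₁ ≠ l₂ := by
  cases h <;> assumption

theorem NHOccurs.not_hOccurs {H : Heap} {l₁ l₂ : ℕ} (h : NHOccurs H l₁ l₂) :
    ¬ HOccurs H l₁ l₂ := by
  induction h with
  | free hne hl =>
    rintro (_ | ⟨hl', hc, _⟩)
    · exact hne rfl
    · cases hl.symm.trans hl'
      simp [HVal.components] at hc
  | step hne hl _ ih =>
    rintro (_ | ⟨hl', hc, hocc⟩)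
    · exact hne rfl
    · cases hl.symm.trans hl'
      exact ih _ hc hocc

def hoist (p : ℕ → Bool) (X : Deriv) (m : ℕ × Ty) (B : Deriv) : Deriv :=
  X.filter (p ·.1) ++ m :: (X.filter (fun q => !p q.1) ++ B)

theorem hoist_perm (p : ℕ → Bool) (X : Deriv) (m : ℕ × Ty) (B : Deriv) :
    (hoist p X m B).Perm (X ++ m :: B) := by
  refine (List.perm_middle.symm.append_left _).trans ?_
  rw [← List.append_assoc]
  exact (List.filter_append_perm _ X).append_right _

theorem not_mem_keys_filter {p : ℕ → Bool} {X : Deriv} {l : ℕ} (hl : p l = false) :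
    l ∉ keys (X.filter (p ·.1)) := by
  simp only [mem_keys, List.mem_filter, not_exists, not_and]
  intro τ _
  simp [hl]

theorem predD_hoist (p : ℕ → Bool) {X : Deriv} {l : ℕ} (τ : Ty) (B : Deriv)
    (hl : l ∉ keys X) :
    predD (hoist p X (l, τ) B) l = keys (X.filter (fun q => !p q.1) ++ B) :=
  predD_append_cons _ _ fun h => hl ((List.filter_sublist.map _).subset h)

theorem succD_hoist (p : ℕ → Bool) {X : Deriv} {l : ℕ} (τ : Ty) (B : Deriv)
    (hl : l ∉ keys X) : succD (hoist p X (l, τ) B) l = keys (X.filter (p ·.1)) :=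
  succD_append_cons _ _ fun h => hl ((List.filter_sublist.map _).subset h)

theorem predD_hoist_subset {p : ℕ → Bool} {A : Deriv} {m : ℕ × Ty} {B : Deriv}
    (hD : (keys (A ++ m :: B)).Nodup) (hm : p m.1) {l : ℕ} (hl : p l = false)
    (hlA : l ∈ keys A) : predD (hoist p A m B) l ⊆ predD (A ++ m :: B) l := by
  obtain ⟨τ, hA⟩ := mem_keys.mp hlA
  obtain ⟨A₁, A₂, rfl⟩ := List.append_of_mem hA
  rw [List.append_assoc, List.cons_append] at hD ⊢
  have hlA₁ := not_mem_keys_of_nodup_append_cons hD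
  have hsplit : hoist p (A₁ ++ (l, τ) :: A₂) m B = (A₁.filter (p ·.1) ++ A₂.filter (p ·.1) ++
      m :: A₁.filter (fun q => !p q.1)) ++ (l, τ) :: (A₂.filter (fun q => !p q.1) ++ B) := by
    simp [hoist, hl]
  have hlm : m.1 ≠ l := fun he => by simp [he ▸ hm] at hl
  have hprefix : l ∉ keys (A₁.filter (p ·.1) ++ A₂.filter (p ·.1) ++
      m :: A₁.filter (fun q => !p q.1)) := by
    simp only [keys_append, List.mem_append, not_or]
    refine ⟨⟨not_mem_keys_filter hl, not_mem_keys_filter hl⟩, ?_⟩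
    rintro (_ | ⟨_, h⟩)
    · exact hlm rfl
    · exact hlA₁ ((List.filter_sublist.map _).subset h)
  rw [hsplit, predD_append_cons _ _ hprefix, predD_append_cons _ _ hlA₁]
  exact ((List.filter_sublist.append (List.sublist_cons_self _ _)).map _).subset

theorem psiOf_hoist_of_eq_false {p : ℕ → Bool} {X : Deriv} {m : ℕ × Ty} {B : Deriv}
    (hm : p m.1) {l : ℕ} (hl : p l = false) :
    psiOf (hoist p X m B) l = psiOf (X.filter (fun q => !p q.1) ++ B) l := by
  have hlm : m.1 ≠ l := fun he => by simp [he ▸ hm] at hl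
  rw [hoist, psiOf_append_of_not_mem _ (not_mem_keys_filter hl)]
  simp [psiOf, hlm]

section HeapTy

variable {Sg : Sig} {H : Heap}

theorem HeapTy.nodup_keys {D : Deriv} (h : HeapTy Sg H D) : (keys D).Nodup := by
  induction h with
  | nil => exact List.nodup_nil
  | cons _ _ _ hfresh ih => exact List.nodup_cons.mpr ⟨psiOf_eq_none_iff.mp hfresh, ih⟩

theorem HeapTy.insert {l : ℕ} {v : HVal} {τ : Ty} {Y : Deriv} (hv : H l = some v)
    (hvt : VTy Sg (psiOf Y) v τ) {X : Deriv} (hty : HeapTy Sg H (X ++ Y))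
    (hl : l ∉ keys (X ++ Y)) : HeapTy Sg H (X ++ (l, τ) :: Y) := by
  induction X with
  | nil => exact .cons hty hv hvt (psiOf_eq_none_iff.mpr hl)
  | cons q X ih =>
    obtain ⟨l', τ'⟩ := q
    rw [List.cons_append] at hty ⊢
    obtain _ | ⟨hty, hv', hvt', hfresh'⟩ := hty
    have hne : l' ≠ l := fun he => hl (by simp [keys, he])
    have hl : l ∉ keys (X ++ Y) := fun h => hl (List.mem_cons_of_mem _ h)
    refine .cons (ih hty hl) hv' (hvt'.mono fun c _ t hc => ?_) ?_
    · have hne : l ≠ c := by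
        rintro rfl
        simp [psiOf_eq_none_iff.mpr hl] at hc
      rwa [psiOf_append_cons_of_ne _ _ _ hne]
    · rwa [psiOf_append_cons_of_ne _ _ _ hne.symm]

theorem HeapTy.hoist_of_upward_closed {p : ℕ → Bool} {m : ℕ × Ty} {B : Deriv}
    (hp : ∀ l v c, H l = some v → c ∈ v.components → p c → p l) (hm : p m.1)
    {X : Deriv} (hty : HeapTy Sg H (X ++ m :: B)) : HeapTy Sg H (hoist p X m B) := by
  induction X with
  | nil => simpa [hoist] using hty
  | cons q X ih =>
    obtain ⟨l, τ⟩ := q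
    rw [List.cons_append] at hty
    cases hty with | @cons _ _ v _ hty hv hvt hfresh =>
    replace ih := ih hty
    have hψ := psiOf_eq_of_perm hty.nodup_keys (hoist_perm p X m B)
    cases hl : p l
    · have hsplit : hoist p X m B
          = (X.filter (p ·.1) ++ [m]) ++ (X.filter (fun q => !p q.1) ++ B) := by
        simp [hoist]
      -- the components of a cell outside `p` are outside `p`, hence typed below `m`
      have hvt : VTy Sg (psiOf (X.filter (fun q => !p q.1) ++ B)) v τ := by
        refine hvt.mono fun c hc t hct => ?_
        have hpc : p c = false :=
          Bool.eq_false_iff.mpr fun hpc => by simpa [hl] using hp l v c hv hc hpc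
        rwa [← psiOf_hoist_of_eq_false hm hpc, hψ]
      have hfresh : l ∉ keys ((X.filter (p ·.1) ++ [m]) ++
          (X.filter (fun q => !p q.1) ++ B)) := by
        rw [← hsplit, ← psiOf_eq_none_iff, hψ]
        exact hfresh
      simpa [hoist, hl] using HeapTy.insert hv hvt (hsplit ▸ ih) hfresh
    · simpa [hoist, hl] using HeapTy.cons ih hv (hψ ▸ hvt) (hψ ▸ hfresh)

end HeapTy

theorem heap_reordering_general {Sg : Sig} {H : Heap} {D : Deriv}
    (hty : HeapTy Sg H D) {l₁ l₂ : ℕ}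
    (h1 : (psiOf D l₁).isSome) (h2 : (psiOf D l₂).isSome)
    (hocc : NHOccurs H l₁ l₂) :
    ∃ D', HeapTy Sg H D' ∧ (∀ l, psiOf D' l = psiOf D l) ∧
      l₂ ∈ predD D' l₁ ∧
      (∀ l ∈ succD D' l₁, l ∈ succD D l₁) ∧
      (∀ l ∈ predD D' l₂, l ∈ predD D l₂) := by
  classical
  obtain ⟨τ₁, hτ₁⟩ := Option.isSome_iff_exists.mp h1
  obtain ⟨τ₂, hτ₂⟩ := Option.isSome_iff_exists.mp h2
  obtain ⟨A, B, rfl⟩ := List.append_of_mem (mem_of_psiOf_eq_some hτ₁)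
  have hD := hty.nodup_keys
  have hl₁A := not_mem_keys_of_nodup_append_cons hD
  by_cases hl₂B : l₂ ∈ keys B
  · exact ⟨_, hty, fun _ => rfl, by rwa [predD_append_cons _ _ hl₁A], fun _ h => h, fun _ h => h⟩
  have hl₂A : (l₂, τ₂) ∈ A := by
    rcases List.mem_append.mp (mem_of_psiOf_eq_some hτ₂) with h | h | ⟨_, h⟩
    · exact h
    · exact absurd rfl hocc.ne
    · exact absurd (mem_keys.mpr ⟨τ₂, h⟩) hl₂B
  let p : ℕ → Bool := fun l => decide (HOccurs H l₁ l)
  have hp (l v c) (hv : H l = some v) (hc : c ∈ v.components) (hpc : p c) : p l :=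
    decide_eq_true (.step hv hc (of_decide_eq_true hpc))
  have hpl₂ : p l₂ = false := decide_eq_false hocc.not_hOccurs
  refine ⟨hoist p A (l₁, τ₁) B, hty.hoist_of_upward_closed hp (decide_eq_true .refl),
    congrFun (psiOf_eq_of_perm hD (hoist_perm _ _ _ _)), ?_, ?_,
    predD_hoist_subset hD (decide_eq_true .refl) hpl₂ (mem_keys.mpr ⟨τ₂, hl₂A⟩)⟩
  · rw [predD_hoist _ _ _ hl₁A, keys_append]
    exact List.mem_append_left _ (mem_keys.mpr ⟨τ₂, List.mem_filter.mpr ⟨hl₂A, by simp [hpl₂]⟩⟩)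
  · rw [succD_hoist _ _ _ hl₁A, succD_append_cons _ _ hl₁A]
    exact (List.filter_sublist.map _).subset

/-- Heap Reordering: if `H : Ψ` via derivation `D`, `H(ℓ₁)` is a
free variable, `ℓ₁` and `ℓ₂` are typed by `Ψ`, and the occurs check
`ℓ₁ ∉_H ℓ₂` passes, then there is another derivation `D'` of `H : Ψ` in which
`ℓ₂` is typed before `ℓ₁`, the successors of `ℓ₁` shrink, and the predecessors
of `ℓ₂` shrink. -/
theorem heap_reordering {Sg : Sig} {H : Heap} {D : Deriv}
    (hty : HeapTy Sg H D) {l₁ l₂ a : ℕ}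
    (hfree : H l₁ = some (.free a))
    (h1 : (psiOf D l₁).isSome) (h2 : (psiOf D l₂).isSome)
    (hocc : NHOccurs H l₁ l₂) :
    ∃ D', HeapTy Sg H D' ∧ (∀ l, psiOf D' l = psiOf D l) ∧
      l₂ ∈ predD D' l₁ ∧
      (∀ l ∈ succD D' l₁, l ∈ succD D l₁) ∧
      (∀ l ∈ predD D' l₂, l ∈ predD D l₂) :=
  heap_reordering_general hty h1 h2 hocc
end

section
/- Trail unwinding commutes with heap extension: if unwinding the trail segment t on store S yields S', then unwinding t on the store extended with a fresh free-variable cell at ℓ yields S' extended with the same free-variable cell at ℓ; consequently, allocating a fresh free variable preserves well-typedness of the trail. -/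
/-- A trail segment: a list of locations annotated with atomic types. -/
abbrev Seg := List (ℕ × ℕ)

/-- Unwinding a trail segment resets each recorded location to a free variable
of the recorded type. -/
def unwind (S : Heap) : Seg → Heap
  | [] => S
  | (l, a) :: t => unwind (S.update l (.free a)) t

/-- A trail frame: a segment, an environment location, and a failure
continuation label. -/
abbrev Frame := Seg × ℕ × ℕ

/-- Trail well-typedness `S ⊢ T ok`: for each frame, unwinding its segment
yields a well-typed store in which the frame's environment is well-typed, and
the remaining trail is ok in the unwound store. -/
inductive TrailOk (Sg : Sig) : Heap → List Frame → Prop where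
  | nil : ∀ {S}, TrailOk Sg S []
  | cons : ∀ {S : Heap} {t : Seg} {w lc : ℕ} {T : List Frame},
      (∃ D, HeapTy Sg (unwind S t) D ∧ (psiOf D w).isSome) →
      TrailOk Sg (unwind S t) T →
      TrailOk Sg S ((t, w, lc) :: T)


/-! Unwinding only writes to the locations recorded in the segment; these are allocated,
hence distinct from the fresh `ℓ`, so the writes commute with the extension at `ℓ` and `ℓ`
stays unallocated in every unwound store. A heap typing derivation never mentions an
unallocated location, so it survives the extension unchanged. -/

namespace Heap

theorem update_apply_of_ne {H : Heap} {l x : ℕ} (v : HVal) (h : x ≠ l) :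
    H.update l v x = H x :=
  if_neg h

theorem update_isSome {H : Heap} {l x : ℕ} (v : HVal) (h : (H x).isSome) :
    (H.update l v x).isSome := by
  by_cases hx : x = l
  · simp [update, hx]
  · rwa [update_apply_of_ne v hx]

theorem update_comm (H : Heap) {l l' : ℕ} (v v' : HVal) (h : l ≠ l') :
    (H.update l v).update l' v' = (H.update l' v').update l v := by
  funext x
  by_cases hx : x = l
  · subst hx
    simp [update, h]
  · by_cases hx' : x = l' <;> simp [update, hx, hx', h.symm]

theorem ne_of_isSome_of_eq_none {H : Heap} {x l : ℕ} (hx : (H x).isSome) (hl : H l = none) :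
    x ≠ l := by
  rintro rfl
  simp [hl] at hx

end Heap

theorem unwind_isSome {S : Heap} {x : ℕ} (t : Seg) (h : (S x).isSome) :
    (unwind S t x).isSome := by
  induction t generalizing S with
  | nil => exact h
  | cons p t ih => exact ih (Heap.update_isSome _ h)

theorem unwind_apply_of_forall_ne {S : Heap} {x : ℕ} {t : Seg} (h : ∀ p ∈ t, p.1 ≠ x) :
    unwind S t x = S x := by
  induction t generalizing S with
  | nil => rfl
  | cons p t ih =>
    rw [unwind, ih fun q hq => h q (List.mem_cons_of_mem _ hq),
      Heap.update_apply_of_ne _ (h p List.mem_cons_self).symm]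

theorem unwind_update_comm {S : Heap} {l : ℕ} (v : HVal) {t : Seg} (h : ∀ p ∈ t, p.1 ≠ l) :
    unwind (S.update l v) t = (unwind S t).update l v := by
  induction t generalizing S with
  | nil => rfl
  | cons p t ih =>
    rw [unwind, unwind, Heap.update_comm _ _ _ (h p List.mem_cons_self).symm,
      ih fun q hq => h q (List.mem_cons_of_mem _ hq)]

theorem unwind_update_comm_of_eq_none {S : Heap} {l : ℕ} (v : HVal) (hl : S l = none)
    {t : Seg} (ht : ∀ p ∈ t, (S p.1).isSome) :
    unwind (S.update l v) t = (unwind S t).update l v :=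
  unwind_update_comm v fun p hp => Heap.ne_of_isSome_of_eq_none (ht p hp) hl

theorem HeapTy.update_of_eq_none {Sg : Sig} {H : Heap} {D : Deriv} {l : ℕ} (v : HVal)
    (hD : HeapTy Sg H D) (hl : H l = none) :
    HeapTy Sg (H.update l v) D := by
  induction hD with
  | nil => exact .nil
  | @cons D l' v' τ _ hl' hv hnew ih =>
    have hne : l' ≠ l := Heap.ne_of_isSome_of_eq_none (by simp [hl']) hl
    exact .cons ih (by rwa [Heap.update_apply_of_ne v hne]) hv hnew

theorem TrailOk.update_of_eq_none {Sg : Sig} {S : Heap} {T : List Frame} {l : ℕ} (v : HVal)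
    (hok : TrailOk Sg S T) (hl : S l = none) (hT : ∀ fr ∈ T, ∀ p ∈ fr.1, (S p.1).isSome) :
    TrailOk Sg (S.update l v) T := by
  induction hok with
  | nil => exact .nil
  | @cons S t w lc T hD _ ih =>
    have ht : ∀ p ∈ t, (S p.1).isSome := hT _ List.mem_cons_self
    have hul : unwind S t l = none := by
      rw [unwind_apply_of_forall_ne fun p hp => Heap.ne_of_isSome_of_eq_none (ht p hp) hl, hl]
    obtain ⟨D, hD, hw⟩ := hD
    refine .cons ?_ ?_
    · rw [unwind_update_comm_of_eq_none v hl ht]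
      exact ⟨D, hD.update_of_eq_none v hul, hw⟩
    · rw [unwind_update_comm_of_eq_none v hl ht]
      exact ih hul fun fr hfr p hp => unwind_isSome _ (hT fr (List.mem_cons_of_mem _ hfr) p hp)

/-- Trail unwinding commutes with heap extension at a fresh
location, and consequently allocating a fresh free variable preserves trail
well-typedness. -/
theorem unwind_extend_fresh {S : Heap} {l a : ℕ} (hfresh : S l = none) :
    (∀ t : Seg, (∀ p ∈ t, (S p.1).isSome) →
      unwind (S.update l (.free a)) t = (unwind S t).update l (.free a)) ∧
    (∀ (Sg : Sig) (T : List Frame), (∀ fr ∈ T, ∀ p ∈ fr.1, (S p.1).isSome) →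
      TrailOk Sg S T → TrailOk Sg (S.update l (.free a)) T) :=
  ⟨fun _ => unwind_update_comm_of_eq_none _ hfresh,
    fun _ _ hT hok => hok.update_of_eq_none _ hfresh hT⟩
end
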